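/- Let U : ℝ → ℝ be differentiable on (0, ∞) and let u : ℝ² → ℝ be the radially symmetric function u(x) = U(‖x‖). Let a and b be distinct points on the unit circle in ℝ² (‖a‖ = ‖b‖ = 1), and let n be a unit vector orthogonal to b − a with ⟨n, a + b⟩ ≥ 0. Then for every point x ≠ 0 on the closed segment joining a and b, the directional derivative of u at x in the direction n satisfies |∇u(x)·n − U′(1)| ≤ |U′(‖x‖) − U′(1)| + |U′(1)| · ‖a − b‖² / 2. -/

import Mathlib

/-!
Write `s = ⟪n, a⟫`. Since `n ⟂ b - a`, the functional `⟪n, ·⟫` is constant, equal to `s`, along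
the chord, and `s ≥ 0` by `⟪n, a + b⟫ ≥ 0`. In the plane, `n` and the unit vector along `b - a`
form an orthonormal basis, so Parseval applied to `a` gives `s² + ‖a - b‖² / 4 = 1`.
At `x` on the chord `∇u(x)·n = U′(‖x‖) c` with `c = s / ‖x‖`, and `s ≤ ‖x‖ ≤ 1` gives
`0 ≤ 1 - c ≤ 1 - s ≤ 1 - s² = ‖a - b‖² / 4`. The estimate follows from
`U′(‖x‖) c - U′(1) = (U′(‖x‖) - U′(1)) c + U′(1) (c - 1)`.
-/

open scoped RealInnerProductSpace
open Module

theorem abs_mul_sub_le_of_abs_le_one {A B c : ℝ} (hc : |c| ≤ 1) :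
    |A * c - B| ≤ |A - B| + |B| * |c - 1| :=
  calc |A * c - B| = |(A - B) * c + B * (c - 1)| := by ring_nf
    _ ≤ |A - B| * |c| + |B| * |c - 1| := by
        rw [← abs_mul, ← abs_mul]; exact abs_add_le _ _
    _ ≤ |A - B| + |B| * |c - 1| := by
        gcongr; exact mul_le_of_le_one_right (abs_nonneg _) hc

theorem abs_div_sub_one_le_one_sub_sq {s r : ℝ} (hs : 0 ≤ s) (hsr : s ≤ r) (hr : r ≤ 1) :
    |s / r - 1| ≤ 1 - s ^ 2 := by
  rcases (hs.trans hsr).eq_or_lt with rfl | hr0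
  · simp [le_antisymm hsr hs]
  have hle : s / r ≤ 1 := div_le_one_of_le₀ hsr hr0.le
  have hge : s ≤ s / r := le_div_self hs hr0 hr
  rw [abs_sub_comm, abs_of_nonneg (sub_nonneg.2 hle)]
  nlinarith

variable {E : Type*} [NormedAddCommGroup E] [InnerProductSpace ℝ E]

theorem hasStrictFDerivAt_norm {x : E} (hx : x ≠ 0) :
    HasStrictFDerivAt (‖·‖) (‖x‖⁻¹ • innerSL ℝ x) x := by
  have hx2 : ‖x‖ ^ 2 ≠ 0 := by positivity
  convert (hasStrictFDerivAt_norm_sq x).sqrt hx2 using 1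
  · simp [Real.sqrt_sq]
  · ext v
    simp only [smul_apply, coe_innerSL_apply, smul_eq_mul, norm_nonneg,
      Real.sqrt_sq, one_div, mul_inv_rev, nsmul_eq_mul, Nat.cast_ofNat]
    field_simp

theorem fderiv_comp_norm_apply {U : ℝ → ℝ} {x : E} (hx : x ≠ 0)
    (hU : DifferentiableAt ℝ U ‖x‖) (v : E) :
    fderiv ℝ (fun y : E => U ‖y‖) x v = deriv U ‖x‖ * (⟪x, v⟫ / ‖x‖) := by
  have h : HasFDerivAt (fun y : E => U ‖y‖) (deriv U ‖x‖ • ‖x‖⁻¹ • innerSL ℝ x) x :=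
    hU.hasDerivAt.comp_hasFDerivAt x (hasStrictFDerivAt_norm hx).hasFDerivAt
  rw [h.fderiv]
  simp [div_eq_inv_mul]

theorem inner_eq_of_mem_segment {n a b x : E} (hab : ⟪n, a⟫ = ⟪n, b⟫)
    (hx : x ∈ segment ℝ a b) : ⟪n, x⟫ = ⟪n, a⟫ :=
  (convex_hyperplane (innerₛₗ ℝ n).isLinear ⟪n, a⟫).segment_subset rfl hab.symm hx

theorem norm_le_one_of_mem_segment {a b x : E} (ha : ‖a‖ ≤ 1) (hb : ‖b‖ ≤ 1)
    (hx : x ∈ segment ℝ a b) : ‖x‖ ≤ 1 := by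
  simpa using (convex_closedBall (0 : E) 1).segment_subset
    (by simpa using ha) (by simpa using hb) hx

theorem inner_sq_add_inner_sq_eq_norm_sq (hE : finrank ℝ E = 2) {u w : E} (hu : ‖u‖ = 1)
    (hw : ‖w‖ = 1) (huw : ⟪u, w⟫ = 0) (v : E) : ⟪v, u⟫ ^ 2 + ⟪v, w⟫ ^ 2 = ‖v‖ ^ 2 := by
  have hon : Orthonormal ℝ ![u, w] := by simp [orthonormal_vecCons_iff, hu, hw, huw]
  let b := (basisOfOrthonormalOfCardEqFinrank hon (by simp [hE])).toOrthonormalBasis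
    (by simpa using hon)
  simpa [b] using b.sum_sq_inner_left v

theorem inner_sub_eq_neg_norm_sub_sq_div_two {a b : E} (hab : ‖a‖ = ‖b‖) :
    ⟪a, b - a⟫ = -(‖b - a‖ ^ 2 / 2) := by
  have h := norm_add_sq_real a (b - a)
  rw [add_sub_cancel, hab] at h
  linarith

theorem inner_sq_add_norm_sub_sq_div_four (hE : finrank ℝ E = 2) {a b n : E} (ha : ‖a‖ = 1)
    (hb : ‖b‖ = 1) (hab : a ≠ b) (hn : ‖n‖ = 1) (horth : ⟪n, b - a⟫ = 0) :
    ⟪n, a⟫ ^ 2 + ‖a - b‖ ^ 2 / 4 = 1 := by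
  have hd : b - a ≠ 0 := sub_ne_zero.2 hab.symm
  have h := inner_sq_add_inner_sq_eq_norm_sq hE hn (norm_smul_inv_norm hd)
    (by rw [inner_smul_right, horth, mul_zero]) a
  rw [real_inner_comm, real_inner_smul_right,
    inner_sub_eq_neg_norm_sub_sq_div_two (ha.trans hb.symm), ha, norm_sub_rev] at h
  have hd' : ‖a - b‖ ≠ 0 := by rw [norm_sub_rev]; exact norm_ne_zero_iff.2 hd
  simp only [RCLike.ofReal_real_eq_id, id] at h
  field_simp at h
  linear_combination h / 4

theorem abs_inner_div_norm_sub_one_le_of_mem_segment (hE : finrank ℝ E = 2) {a b n x : E}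
    (ha : ‖a‖ = 1) (hb : ‖b‖ = 1) (hab : a ≠ b) (hn : ‖n‖ = 1) (horth : ⟪n, b - a⟫ = 0)
    (hout : 0 ≤ ⟪n, a + b⟫) (hx : x ∈ segment ℝ a b) :
    |⟪x, n⟫ / ‖x‖ - 1| ≤ ‖a - b‖ ^ 2 / 4 := by
  have hnab : ⟪n, a⟫ = ⟪n, b⟫ := by rw [inner_sub_right, sub_eq_zero] at horth; exact horth.symm
  have hs : ⟪x, n⟫ = ⟪n, a⟫ := by rw [real_inner_comm, inner_eq_of_mem_segment hnab hx]
  have hs0 : 0 ≤ ⟪n, a⟫ := by rw [inner_add_right, ← hnab] at hout; linarith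
  have hsx : ⟪x, n⟫ ≤ ‖x‖ := by simpa [hn] using real_inner_le_norm x n
  have hx1 : ‖x‖ ≤ 1 := norm_le_one_of_mem_segment ha.le hb.le hx
  have hchord := inner_sq_add_norm_sub_sq_div_four hE ha hb hab hn horth
  rw [hs] at hsx ⊢
  linarith [abs_div_sub_one_le_one_sub_sq hs0 hsx hx1]

/-- Pointwise estimate for the normal derivative of a radially symmetric function
along a chord of the unit circle: with `u(x) = U(‖x‖)`, `U` differentiable on
`(0, ∞)`, and `n` the outward unit normal of the chord from `a` to `b` on the unit
circle, for every `x ≠ 0` on the segment `[a, b]`,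
`|∇u(x)·n − U′(1)| ≤ |U′(‖x‖) − U′(1)| + |U′(1)| ‖a − b‖² / 2`. -/
theorem radial_normal_derivative_estimate
    (U : ℝ → ℝ) (hU : DifferentiableOn ℝ U (Set.Ioi 0))
    (a b : EuclideanSpace ℝ (Fin 2)) (ha : ‖a‖ = 1) (hb : ‖b‖ = 1) (hab : a ≠ b)
    (n : EuclideanSpace ℝ (Fin 2)) (hn : ‖n‖ = 1)
    (horth : ⟪n, b - a⟫ = 0) (hout : 0 ≤ ⟪n, a + b⟫) :
    ∀ x ∈ segment ℝ a b, x ≠ 0 →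
      |fderiv ℝ (fun y : EuclideanSpace ℝ (Fin 2) => U ‖y‖) x n - deriv U 1| ≤
        |deriv U ‖x‖ - deriv U 1| + |deriv U 1| * ‖a - b‖ ^ 2 / 2 := by
  intro x hx hx0
  have hUx : DifferentiableAt ℝ U ‖x‖ := hU.differentiableAt (Ioi_mem_nhds (norm_pos_iff.2 hx0))
  have hcos : |⟪x, n⟫ / ‖x‖| ≤ 1 := by
    simpa [hn] using abs_real_inner_div_norm_mul_norm_le_one x n
  have hangle := abs_inner_div_norm_sub_one_le_of_mem_segment finrank_euclideanSpace_fin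
    ha hb hab hn horth hout hx
  rw [fderiv_comp_norm_apply hx0 hUx]
  calc _ ≤ |deriv U ‖x‖ - deriv U 1| + |deriv U 1| * |⟪x, n⟫ / ‖x‖ - 1| :=
        abs_mul_sub_le_of_abs_le_one hcos
    _ ≤ |deriv U ‖x‖ - deriv U 1| + |deriv U 1| * ‖a - b‖ ^ 2 / 2 := by
        rw [mul_div_assoc]
        gcongr
        linarith [sq_nonneg ‖a - b‖]
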